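/- Let E_γ(u) := (1/2)∫_Ω (|∇u|² - k²|u|²) dx + γ ∫_Ω |L u|² dx with L u := -Δu - k²u. Then for any α ∈ R, ν E_γ(u) = ν γ‖L u‖² + (ν/2 - α(ν-2))‖∇u‖² + (α - 1/2) ν k² ‖u‖² - α ∫_Ω 2Re((x·∇u) conj(L u)) dx - α ∫_{∂Ω} (2Re((x·∇ū)(∇u·n)) - |∇u|²(x·n) + k²|u|²(x·n)) dS. -/

import Mathlib

open MeasureTheory Complex ComplexConjugate Finset

noncomputable section

abbrev Euc (ν : ℕ) := EuclideanSpace ℝ (Fin ν)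

/-- Partial derivative `∂u/∂x_i`. -/
noncomputable def pd (ν : ℕ) (u : Euc ν → ℂ) (i : Fin ν) (x : Euc ν) : ℂ :=
  fderiv ℝ u x (EuclideanSpace.single i 1)

/-- Laplacian `Δu = ∑ ∂²u/∂x_i²`. -/
noncomputable def lap (ν : ℕ) (u : Euc ν → ℂ) (x : Euc ν) : ℂ :=
  ∑ i, fderiv ℝ (fun y => fderiv ℝ u y (EuclideanSpace.single i 1)) x (EuclideanSpace.single i 1)

/-- Helmholtz operator `L u = -Δu - k²u`. -/
noncomputable def helm (ν : ℕ) (k : ℝ) (u : Euc ν → ℂ) (x : Euc ν) : ℂ :=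
  -(lap ν u x) - (k^2 : ℂ) * u x

/-- `x·∇u = ∑ x_j ∂u/∂x_j`. -/
noncomputable def xgrad (ν : ℕ) (u : Euc ν → ℂ) (x : Euc ν) : ℂ :=
  ∑ i, (x i : ℂ) * pd ν u i x

/-- `|∇u|² = ∑ |∂u/∂x_j|²`. -/
noncomputable def gradSq (ν : ℕ) (u : Euc ν → ℂ) (x : Euc ν) : ℝ :=
  ∑ i, Complex.normSq (pd ν u i x)

/-- normal derivative `∇u·n`. -/
noncomputable def dnormal (ν : ℕ) (u : Euc ν → ℂ) (n : Euc ν → Euc ν) (x : Euc ν) : ℂ :=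
  ∑ i, pd ν u i x * ((n x i : ℝ) : ℂ)

/-- componentwise divergence of a complex vector field. -/
noncomputable def divC (ν : ℕ) (F : Euc ν → Fin ν → ℂ) (x : Euc ν) : ℂ :=
  ∑ i, fderiv ℝ (fun y => F y i) x (EuclideanSpace.single i 1)

/-- `x·n`. -/
noncomputable def xdotn (ν : ℕ) (n : Euc ν → Euc ν) (x : Euc ν) : ℝ :=
  ∑ i, x i * n x i

end

section AuxProof

variable {ν : ℕ} {k : ℝ} {u : Euc ν → ℂ}


lemma pd_contDiff (hu : ContDiff ℝ 2 u) (i : Fin ν) : ContDiff ℝ 1 (pd ν u i) :=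
  (hu.fderiv_right (m := 1) (by norm_num)).clm_apply contDiff_const

lemma star_contDiff {f : Euc ν → ℂ} (hf : ContDiff ℝ 1 f) :
    ContDiff ℝ 1 (fun y => star (f y)) := by
  have : (fun y => star (f y)) = (⇑(Complex.conjCLE.toContinuousLinearMap) ∘ f) := rfl
  rw [this]
  exact Complex.conjCLE.toContinuousLinearMap.contDiff.comp hf

lemma coord_contDiff (j : Fin ν) : ContDiff ℝ 1 (fun y : Euc ν => ((y j : ℝ) : ℂ)) :=
  (Complex.ofRealCLM.comp (EuclideanSpace.proj j)).contDiff

noncomputable def FF (ν : ℕ) (k : ℝ) (u : Euc ν → ℂ) (y : Euc ν) (i : Fin ν) : ℂ :=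
  (star (xgrad ν u y) * pd ν u i y + xgrad ν u y * star (pd ν u i y))
    - ((∑ j, pd ν u j y * star (pd ν u j y)) - (k^2:ℂ) * (u y * star (u y))) * ((y i : ℝ) : ℂ)

lemma xgrad_contDiff (hu : ContDiff ℝ 2 u) : ContDiff ℝ 1 (xgrad ν u) := by
  apply ContDiff.sum
  intro j _
  exact (coord_contDiff j).mul (pd_contDiff hu j)

lemma FF_contDiff (hu : ContDiff ℝ 2 u) : ContDiff ℝ 1 (FF ν k u) := by
  rw [contDiff_pi]
  intro i
  refine ContDiff.sub (ContDiff.add ?_ ?_) (ContDiff.mul (ContDiff.sub ?_ ?_) ?_)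
  · exact (star_contDiff (xgrad_contDiff hu)).mul (pd_contDiff hu i)
  · exact (xgrad_contDiff hu).mul (star_contDiff (pd_contDiff hu i))
  · exact ContDiff.sum fun j _ => (pd_contDiff hu j).mul (star_contDiff (pd_contDiff hu j))
  · exact contDiff_const.mul
      ((hu.of_le (by norm_num)).mul (star_contDiff (hu.of_le (by norm_num))))
  · exact coord_contDiff i

lemma FF_bdry (n : Euc ν → Euc ν) (x : Euc ν) :
    (∑ i, FF ν k u x i * ((n x i : ℝ) : ℂ))
      = ((2 * (conj (xgrad ν u x) * dnormal ν u n x).re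
          - gradSq ν u x * xdotn ν n x
          + k^2 * Complex.normSq (u x) * xdotn ν n x : ℝ) : ℂ) := by
  have hGx : ((gradSq ν u x : ℝ) : ℂ) = ∑ j, pd ν u j x * star (pd ν u j x) := by
    rw [gradSq]; push_cast
    exact Finset.sum_congr rfl fun i _ => (Complex.mul_conj _).symm
  have hNS : ((Complex.normSq (u x) : ℝ) : ℂ) = u x * star (u x) := (Complex.mul_conj _).symm
  have hdn : star (dnormal ν u n x) = ∑ i, star (pd ν u i x) * ((n x i : ℝ):ℂ) := by
    rw [dnormal, star_sum]
    exact Finset.sum_congr rfl fun i _ => by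
      rw [star_mul', Complex.star_def, Complex.conj_ofReal]
  have h2re : ((2 * (conj (xgrad ν u x) * dnormal ν u n x).re : ℝ) : ℂ)
      = star (xgrad ν u x) * dnormal ν u n x + xgrad ν u x * star (dnormal ν u n x) := by
    rw [← Complex.add_conj]
    simp only [Complex.star_def, map_mul, Complex.conj_conj]
  have hxn : ((xdotn ν n x : ℝ) : ℂ) = ∑ i, ((x i : ℝ):ℂ) * ((n x i : ℝ):ℂ) := by
    rw [xdotn]; push_cast; rfl
  rw [Complex.ofReal_add, Complex.ofReal_sub, Complex.ofReal_mul (k^2 * _),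
    Complex.ofReal_mul (gradSq ν u x), h2re, hxn,
    show ((k^2 * Complex.normSq (u x) : ℝ) : ℂ) = (k^2:ℂ) * (u x * star (u x)) by
      rw [Complex.ofReal_mul, hNS]; push_cast; ring]
  rw [hGx, hdn, dnormal]
  simp only [Finset.mul_sum, Finset.sum_mul]
  rw [← Finset.sum_add_distrib, ← Finset.sum_sub_distrib, ← Finset.sum_add_distrib]
  refine Finset.sum_congr rfl fun i _ => ?_
  rw [FF]
  simp only [sub_mul, add_mul, Finset.sum_mul, mul_assoc]
  ring

lemma pd_symm (hu : ContDiff ℝ 2 u) (x : Euc ν) (i j : Fin ν) :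
    fderiv ℝ (pd ν u j) x (EuclideanSpace.single i 1)
      = fderiv ℝ (pd ν u i) x (EuclideanSpace.single j 1) := by
  have hdd : DifferentiableAt ℝ (fderiv ℝ u) x :=
    ((hu.fderiv_right (m := 1) (by norm_num)).differentiable one_ne_zero) x
  have h : ∀ l : Fin ν, fderiv ℝ (pd ν u l) x
      = (fderiv ℝ (fderiv ℝ u) x).flip (EuclideanSpace.single l 1) := by
    intro l
    have := fderiv_clm_apply (c := fderiv ℝ u)
      (u := fun _ : Euc ν => (EuclideanSpace.single l 1 : Euc ν)) hdd (differentiableAt_const _)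
    show fderiv ℝ (fun y => fderiv ℝ u y (EuclideanSpace.single l 1)) x = _
    simpa [fderiv_const] using this
  rw [h i, h j]
  exact (hu.contDiffAt.isSymmSndFDerivAt (by simp)) _ _

noncomputable def Xclm (ν : ℕ) (u : Euc ν → ℂ) (x : Euc ν) : Euc ν →L[ℝ] ℂ :=
  ∑ j, ((x j : ℂ) • fderiv ℝ (pd ν u j) x
        + pd ν u j x • (Complex.ofRealCLM.comp (EuclideanSpace.proj j)))

lemma Xclm_apply (x : Euc ν) (i : Fin ν) :
    Xclm ν u x (EuclideanSpace.single i 1)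
      = pd ν u i x + ∑ j, (x j : ℂ) * fderiv ℝ (pd ν u j) x (EuclideanSpace.single i 1) := by
  simp [Xclm, ContinuousLinearMap.sum_apply, EuclideanSpace.single_apply,
    Finset.sum_add_distrib, apply_ite, mul_ite]
  ring

lemma hasFDerivAt_xgrad (hu : ContDiff ℝ 2 u) (x : Euc ν) :
    HasFDerivAt (xgrad ν u) (Xclm ν u x) x := by
  apply HasFDerivAt.fun_sum
  intro j _
  exact ((Complex.ofRealCLM.comp (EuclideanSpace.proj j)).hasFDerivAt).mul
    (((pd_contDiff hu j).differentiable one_ne_zero x).hasFDerivAt)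

lemma key_eval (hu : ContDiff ℝ 2 u) (x : Euc ν) (i : Fin ν) :
    fderiv ℝ (fun y => FF ν k u y i) x (EuclideanSpace.single i 1)
    = (star (xgrad ν u x) * fderiv ℝ (pd ν u i) x (EuclideanSpace.single i 1)
        + pd ν u i x * star (Xclm ν u x (EuclideanSpace.single i 1)))
      + (xgrad ν u x * star (fderiv ℝ (pd ν u i) x (EuclideanSpace.single i 1))
        + star (pd ν u i x) * (Xclm ν u x (EuclideanSpace.single i 1)))
      - ((∑ j, (pd ν u j x * star (fderiv ℝ (pd ν u j) x (EuclideanSpace.single i 1))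
              + star (pd ν u j x) * fderiv ℝ (pd ν u j) x (EuclideanSpace.single i 1)))
          - (k^2:ℂ) * (u x * star (pd ν u i x) + star (u x) * pd ν u i x)) * (x i : ℂ)
      - ((∑ j, pd ν u j x * star (pd ν u j x)) - (k^2:ℂ) * (u x * star (u x))) := by
  have hud : Differentiable ℝ u := hu.differentiable (by norm_num)
  have hp : ∀ l : Fin ν, HasFDerivAt (pd ν u l) (fderiv ℝ (pd ν u l) x) x :=
    fun l => (((pd_contDiff hu l).differentiable one_ne_zero) x).hasFDerivAt
  have hX := hasFDerivAt_xgrad hu x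
  have hux : HasFDerivAt u (fderiv ℝ u x) x := (hud x).hasFDerivAt
  have hR : HasFDerivAt
      (fun y => (∑ j, pd ν u j y * star (pd ν u j y)) - (k^2:ℂ) * (u y * star (u y))) _ x :=
    (HasFDerivAt.fun_sum (fun j _ => (hp j).mul (hp j).star)).sub ((hux.mul hux.star).const_mul _)
  have hcoord : HasFDerivAt (fun y : Euc ν => ((y i : ℝ) : ℂ))
      (Complex.ofRealCLM.comp (EuclideanSpace.proj i)) x :=
    (Complex.ofRealCLM.comp (EuclideanSpace.proj i)).hasFDerivAt
  have hFi : HasFDerivAt (fun y => FF ν k u y i) _ x :=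
    ((hX.star.mul (hp i)).add (hX.mul (hp i).star)).sub (hR.mul hcoord)
  rw [hFi.fderiv]
  simp only [ContinuousLinearMap.add_apply, ContinuousLinearMap.sub_apply,
    ContinuousLinearMap.smul_apply, ContinuousLinearMap.coe_sum', Finset.sum_apply,
    ContinuousLinearMap.coe_comp', Function.comp_apply, ContinuousLinearMap.coe_smul',
    Pi.smul_apply, smul_eq_mul, Complex.ofRealCLM_apply,
    EuclideanSpace.single_apply, ContinuousLinearEquiv.coe_coe]
  simp only [Complex.conjCLE_apply, starL'_apply]
  simp [Xclm, pd, if_pos, mul_comm, EuclideanSpace.single_apply]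
  ring

lemma divC_FF (hu : ContDiff ℝ 2 u) (x : Euc ν) :
    divC ν (FF ν k u) x
      = ((((2:ℝ) - ν) * gradSq ν u x + ν * k^2 * Complex.normSq (u x)
          - 2 * ((xgrad ν u x) * conj (helm ν k u x)).re : ℝ) : ℂ) := by
  have hre : ((2 * ((xgrad ν u x) * conj (helm ν k u x)).re : ℝ) : ℂ)
      = xgrad ν u x * star (helm ν k u x) + star (xgrad ν u x) * helm ν k u x := by
    rw [← Complex.add_conj]
    simp only [Complex.star_def, map_mul, Complex.conj_conj]
  rw [divC]
  rw [Finset.sum_congr rfl (fun i _ => key_eval hu x i)]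
  simp only [Xclm_apply]
  set X := xgrad ν u x with hXdef
  set U := u x with hU
  set D : Fin ν → ℂ := fun i => pd ν u i x with hD
  set Hm : Fin ν → Fin ν → ℂ :=
    fun i j => fderiv ℝ (pd ν u j) x (EuclideanSpace.single i 1) with hHm
  set L := lap ν u x with hL
  have hG : ((gradSq ν u x : ℝ) : ℂ) = ∑ j, D j * star (D j) := by
    rw [gradSq]
    push_cast
    exact Finset.sum_congr rfl fun i _ => (Complex.mul_conj _).symm
  have hLs : L = ∑ i, Hm i i := rfl
  have hXs : X = ∑ i, (x i : ℂ) * D i := rfl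
  have hsym : ∀ i j, Hm i j = Hm j i := fun i j => pd_symm hu x i j
  have step1 : ∀ i ∈ (Finset.univ : Finset (Fin ν)),
      ((star X * Hm i i + D i * star (D i + ∑ j, (x j : ℂ) * Hm i j))
      + (X * star (Hm i i) + star (D i) * (D i + ∑ j, (x j : ℂ) * Hm i j))
      - ((∑ j, (D j * star (Hm i j) + star (D j) * Hm i j))
          - (k^2:ℂ) * (U * star (D i) + star U * D i)) * (x i : ℂ)
      - ((∑ j, D j * star (D j)) - (k^2:ℂ) * (U * star U)))
      = (star X * Hm i i) + (X * star (Hm i i))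
        + (D i * star (D i) + star (D i) * D i)
        + ((∑ j, star ((x j : ℂ)) * (D i * star (Hm i j)))
            + (∑ j, (x j : ℂ) * (star (D i) * Hm i j)))
        - (∑ j, (x i : ℂ) * (D j * star (Hm i j) + star (D j) * Hm i j))
        + (k^2:ℂ) * ((x i : ℂ) * (U * star (D i) + star U * D i))
        - ((∑ j, D j * star (D j)) - (k^2:ℂ) * (U * star U)) := by
    intro i _
    have A1 : D i * star (∑ j, (x j : ℂ) * Hm i j)
        = ∑ j, star ((x j : ℂ)) * (D i * star (Hm i j)) := by
      rw [star_sum, Finset.mul_sum]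
      exact Finset.sum_congr rfl fun j _ => by rw [star_mul']; ring
    have A2 : star (D i) * (∑ j, (x j : ℂ) * Hm i j)
        = ∑ j, (x j : ℂ) * (star (D i) * Hm i j) := by
      rw [Finset.mul_sum]; exact Finset.sum_congr rfl fun j _ => by ring
    have A3 : (∑ j, (D j * star (Hm i j) + star (D j) * Hm i j)) * (x i : ℂ)
        = ∑ j, (x i : ℂ) * (D j * star (Hm i j) + star (D j) * Hm i j) := by
      rw [Finset.sum_mul]; exact Finset.sum_congr rfl fun j _ => by ring
    rw [star_add, mul_add, mul_add, A1, A2, sub_mul, A3]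
    ring
  rw [Finset.sum_congr rfl step1]
  simp only [Finset.sum_add_distrib, Finset.sum_sub_distrib, Finset.sum_const,
    Finset.card_univ, Fintype.card_fin, nsmul_eq_mul]
  have hA : (∑ i, star X * Hm i i) = star X * L := by rw [hLs, Finset.mul_sum]
  have hB : (∑ i, X * star (Hm i i)) = X * star L := by
    rw [hLs, star_sum, Finset.mul_sum]
  have hC2 : (∑ i, star (D i) * D i) = ∑ j, D j * star (D j) :=
    Finset.sum_congr rfl fun i _ => mul_comm _ _
  have hswap : ((∑ i, ∑ j, star ((x j : ℂ)) * (D i * star (Hm i j)))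
        + ∑ i, ∑ j, (x j : ℂ) * (star (D i) * Hm i j))
      = ∑ i, ∑ j, (x i : ℂ) * (D j * star (Hm i j) + star (D j) * Hm i j) := by
    have h1 : (∑ i, ∑ j, star ((x j : ℂ)) * (D i * star (Hm i j)))
        = ∑ i, ∑ j, (x i : ℂ) * (D j * star (Hm i j)) := by
      rw [Finset.sum_comm]
      exact Finset.sum_congr rfl fun i _ => Finset.sum_congr rfl fun j _ => by
        rw [hsym j i, Complex.star_def, Complex.conj_ofReal]
    have h2 : (∑ i, ∑ j, (x j : ℂ) * (star (D i) * Hm i j))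
        = ∑ i, ∑ j, (x i : ℂ) * (star (D j) * Hm i j) := by
      rw [Finset.sum_comm]
      exact Finset.sum_congr rfl fun i _ => Finset.sum_congr rfl fun j _ => by
        rw [hsym j i]
    rw [h1, h2, ← Finset.sum_add_distrib]
    refine Finset.sum_congr rfl fun i _ => ?_
    rw [← Finset.sum_add_distrib]
    exact (Finset.sum_congr rfl fun j _ => by ring).symm
  have hXstar : star X = ∑ i, (x i : ℂ) * star (D i) := by
    rw [hXs, star_sum]
    exact Finset.sum_congr rfl fun i _ => by
      rw [star_mul', Complex.star_def, Complex.conj_ofReal]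
  have hE : (∑ i, (k^2:ℂ) * ((x i : ℂ) * (U * star (D i) + star U * D i)))
      = (k^2:ℂ) * (U * star X + star U * X) := by
    rw [hXstar, hXs, Finset.mul_sum, Finset.mul_sum, ← Finset.sum_add_distrib,
      Finset.mul_sum]
    exact Finset.sum_congr rfl fun i _ => by ring
  rw [hA, hB, hC2, hE, hswap]
  rw [Complex.ofReal_sub, Complex.ofReal_add, Complex.ofReal_mul, Complex.ofReal_mul, hre]
  rw [show ((ν * k^2 : ℝ) : ℂ) = (ν : ℂ) * (k:ℂ)^2 by push_cast; ring]
  rw [show (((2:ℝ) - ν : ℝ) : ℂ) = 2 - (ν : ℂ) by push_cast; ring]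
  rw [hG]
  have hHelm : helm ν k u x = -L - (k^2:ℂ) * U := rfl
  rw [hHelm]
  have hNS : ((Complex.normSq U : ℝ) : ℂ) = U * star U := (Complex.mul_conj _).symm
  rw [hNS]
  simp only [Complex.star_def, map_sub, map_neg, map_mul, Complex.conj_ofReal, map_pow]
  ring

lemma integral_complex_ofReal' {X : Type*} [MeasurableSpace X] {μ : Measure X} (f : X → ℝ) :
    ∫ x, ((f x : ℝ) : ℂ) ∂μ = ((∫ x, f x ∂μ : ℝ) : ℂ) :=
  integral_ofReal

end AuxProof

/-- energy identity with penalty,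
`ν E_γ(u) = E_{γ,Ω}(ν,α;u) + E_{γ,∂Ω}(ν,α;u)`. -/
theorem energy_identity_with_penalty (ν : ℕ) (k : ℝ) (hk : 0 < k) (γ α : ℝ)
    (Ω : Set (Euc ν)) (hΩb : Bornology.IsBounded Ω) (hΩm : MeasurableSet Ω)
    (n : Euc ν → Euc ν) (σ : Measure (Euc ν))
    (hdiv : ∀ F : Euc ν → Fin ν → ℂ, ContDiff ℝ 1 F →
      (∫ x in Ω, divC ν F x) = ∫ x, (∑ i, F x i * ((n x i : ℝ) : ℂ)) ∂σ)
    (u : Euc ν → ℂ) (hu : ContDiff ℝ 2 u)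
    (hg : IntegrableOn (fun x => gradSq ν u x) Ω)
    (hu2 : IntegrableOn (fun x => Complex.normSq (u x)) Ω)
    (hL2 : IntegrableOn (fun x => Complex.normSq (helm ν k u x)) Ω)
    (hm : IntegrableOn (fun x => 2 * ((xgrad ν u x) * conj (helm ν k u x)).re) Ω) :
    (ν : ℝ) * ((1/2) * (∫ x in Ω, (gradSq ν u x - k^2 * Complex.normSq (u x)))
        + γ * ∫ x in Ω, Complex.normSq (helm ν k u x))
      = (ν : ℝ) * γ * (∫ x in Ω, Complex.normSq (helm ν k u x))
        + ((ν : ℝ)/2 - α * ((ν : ℝ) - 2)) * (∫ x in Ω, gradSq ν u x)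
        + (α - 1/2) * (ν : ℝ) * k^2 * (∫ x in Ω, Complex.normSq (u x))
        - α * (∫ x in Ω, 2 * ((xgrad ν u x) * conj (helm ν k u x)).re)
        - α * (∫ x, (2 * (conj (xgrad ν u x) * dnormal ν u n x).re
              - gradSq ν u x * xdotn ν n x
              + k^2 * Complex.normSq (u x) * xdotn ν n x) ∂σ) := by
  have hdivF := hdiv (FF ν k u) (FF_contDiff hu)
  simp only [divC_FF hu] at hdivF
  simp only [FF_bdry n] at hdivF
  rw [integral_complex_ofReal', integral_complex_ofReal'] at hdivF
  have hR : (∫ x in Ω, (((2:ℝ) - ν) * gradSq ν u x + ν * k^2 * Complex.normSq (u x)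
        - 2 * ((xgrad ν u x) * conj (helm ν k u x)).re))
      = ∫ x, (2 * (conj (xgrad ν u x) * dnormal ν u n x).re
          - gradSq ν u x * xdotn ν n x
          + k^2 * Complex.normSq (u x) * xdotn ν n x) ∂σ :=
    Complex.ofReal_inj.mp hdivF
  have hI1 : IntegrableOn
      (fun x => ((2:ℝ) - ν) * gradSq ν u x + (ν : ℝ) * k^2 * Complex.normSq (u x)) Ω :=
    (hg.const_mul _).add (hu2.const_mul _)
  have hI2 : IntegrableOn (fun x => ((2:ℝ) - ν) * gradSq ν u x) Ω := hg.const_mul _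
  have hI3 : IntegrableOn (fun x => (ν : ℝ) * k^2 * Complex.normSq (u x)) Ω :=
    hu2.const_mul _
  rw [integral_sub hI1 hm, integral_add hI2 hI3,
    integral_const_mul _ _, integral_const_mul _ _] at hR
  have hI4 : IntegrableOn (fun x => k^2 * Complex.normSq (u x)) Ω := hu2.const_mul _
  rw [integral_sub hg hI4, integral_const_mul _ _]
  linear_combination (-α) * hR
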